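/- arXiv:math/0405073 — 5 statements merged into one kernel-verified Lean document; each statement's English description precedes it below -/
import Mathlib

section
/- Let A → B be a ring homomorphism, F an A-algebra, and V ⊆ F an A-submodule. Under the canonical isomorphism Γⁿ_A(F) ⊗_A B ≅ Γⁿ_B(F ⊗_A B), the extension of the ideal of norms I_V ⊆ Γⁿ_A(F) equals the ideal of norms I_{V_B} associated to the image V_B of V ⊗_A B in F ⊗_A B. -/
open scoped TensorProduct

attribute [local instance] Algebra.TensorProduct.rightAlgebra

/-- `δ(x,y) = ∑_{σ ∈ Sₙ} (-1)^{|σ|} γ¹(x₁ y_{σ(1)}) * ⋯ * γ¹(xₙ y_{σ(n)}) ∈ Γⁿ_A(F)`,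
where `p1` records the external product `γ¹(z 1) * ⋯ * γ¹(z n)`. -/
noncomputable def extDelta {A F Γn : Type*} [CommRing A] [CommRing F] [Algebra A F]
    [CommRing Γn] [Algebra A Γn] {n : ℕ}
    (p1 : MultilinearMap A (fun _ : Fin n => F) Γn) (x y : Fin n → F) : Γn :=
  ∑ σ : Equiv.Perm (Fin n),
    ((Equiv.Perm.sign σ : ℤ)) • p1 (fun i => x i * y (σ i))

/-- The ideal of norms `I_V ⊆ Γⁿ_A(F)` associated to an `A`-submodule `V ⊆ F`: the ideal
generated by all `δ(x,y)` with `x₁,…,xₙ, y₁,…,yₙ ∈ V`. -/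
noncomputable def normIdeal {A F Γn : Type*} [CommRing A] [CommRing F] [Algebra A F]
    [CommRing Γn] [Algebra A Γn] {n : ℕ}
    (p1 : MultilinearMap A (fun _ : Fin n => F) Γn) (V : Submodule A F) : Ideal Γn :=
  Ideal.span {t | ∃ x y : Fin n → F,
    (∀ i, x i ∈ V) ∧ (∀ i, y i ∈ V) ∧ t = extDelta p1 x y}

/-- A multilinear map whose values on tuples of generators lie in a submodule takes all
tuples with entries in the span into that submodule. -/
lemma multilinear_mem_span {R M N : Type*} [CommRing R] [AddCommGroup M] [Module R M]
    [AddCommGroup N] [Module R N] {m : ℕ}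
    (f : MultilinearMap R (fun _ : Fin m => M) N) (s : Set M) (p : Submodule R N)
    (h : ∀ x : Fin m → M, (∀ i, x i ∈ s) → f x ∈ p) :
    ∀ x : Fin m → M, (∀ i, x i ∈ Submodule.span R s) → f x ∈ p := by
  suffices H : ∀ k : ℕ, ∀ x : Fin m → M,
      (∀ i : Fin m, (i : ℕ) < k → x i ∈ Submodule.span R s) →
      (∀ i : Fin m, ¬ ((i : ℕ) < k) → x i ∈ s) → f x ∈ p by
    intro x hx
    exact H m x (fun i _ => hx i) (fun i hi => absurd i.isLt hi)
  intro k
  induction k with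
  | zero =>
    intro x _ h2
    exact h x fun i => h2 i (Nat.not_lt_zero _)
  | succ k ih =>
    intro x h1 h2
    by_cases hk : k < m
    · set j : Fin m := ⟨k, hk⟩ with hj
      have hxj : x j ∈ Submodule.span R s := h1 j (Nat.lt_succ_self k)
      have key : ∀ v ∈ Submodule.span R s, f (Function.update x j v) ∈ p := by
        intro v hv
        induction hv using Submodule.span_induction with
        | mem v hv =>
          apply ih
          · intro i hi
            have hij : i ≠ j := by
              intro he; subst he; exact absurd hi (lt_irrefl _)
            rw [Function.update_of_ne hij]
            exact h1 i (Nat.lt_succ_of_lt hi)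
          · intro i hi
            rcases eq_or_ne i j with rfl | hij
            · simpa using hv
            · rw [Function.update_of_ne hij]
              refine h2 i fun hlt => ?_
              rcases Nat.lt_succ_iff_lt_or_eq.mp hlt with h' | h'
              · exact hi h'
              · exact hij (Fin.ext h')
        | zero => rw [f.map_update_zero]; exact p.zero_mem
        | add a b _ _ ha hb => rw [f.map_update_add]; exact p.add_mem ha hb
        | smul r a _ ha => rw [f.map_update_smul]; exact p.smul_mem r ha
      have := key (x j) hxj
      rwa [Function.update_eq_self] at this
    · apply ih
      · intro i _
        exact h1 i (Nat.lt_succ_of_lt (i.isLt.trans_le (Nat.le_of_not_lt hk)))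
      · intro i hi
        exact absurd (i.isLt.trans_le (Nat.le_of_not_lt hk)) hi

/-- `x ↦ extDelta p1 x y` as a multilinear map. -/
noncomputable def deltaFst {B F' Γ : Type*} [CommRing B] [CommRing F'] [Algebra B F']
    [CommRing Γ] [Algebra B Γ] {n : ℕ}
    (p1 : MultilinearMap B (fun _ : Fin n => F') Γ) (y : Fin n → F') :
    MultilinearMap B (fun _ : Fin n => F') Γ :=
  ∑ σ : Equiv.Perm (Fin n),
    ((Equiv.Perm.sign σ : ℤ)) •
      p1.compLinearMap fun i => LinearMap.mulRight B (y (σ i))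

lemma deltaFst_apply {B F' Γ : Type*} [CommRing B] [CommRing F'] [Algebra B F']
    [CommRing Γ] [Algebra B Γ] {n : ℕ}
    (p1 : MultilinearMap B (fun _ : Fin n => F') Γ) (x y : Fin n → F') :
    deltaFst p1 y x = extDelta p1 x y := by
  simp [deltaFst, extDelta, MultilinearMap.sum_apply]

/-- `y ↦ extDelta p1 x y` as a multilinear map. -/
noncomputable def deltaSnd {B F' Γ : Type*} [CommRing B] [CommRing F'] [Algebra B F']
    [CommRing Γ] [Algebra B Γ] {n : ℕ}
    (p1 : MultilinearMap B (fun _ : Fin n => F') Γ) (x : Fin n → F') :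
    MultilinearMap B (fun _ : Fin n => F') Γ :=
  ∑ σ : Equiv.Perm (Fin n),
    ((Equiv.Perm.sign σ : ℤ)) •
      MultilinearMap.domDomCongr σ (p1.compLinearMap fun i => LinearMap.mulLeft B (x i))

lemma deltaSnd_apply {B F' Γ : Type*} [CommRing B] [CommRing F'] [Algebra B F']
    [CommRing Γ] [Algebra B Γ] {n : ℕ}
    (p1 : MultilinearMap B (fun _ : Fin n => F') Γ) (x y : Fin n → F') :
    deltaSnd p1 x y = extDelta p1 x y := by
  simp [deltaSnd, extDelta, MultilinearMap.sum_apply]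

/-- **Lemma 2.5 (base change of the ideal of norms).**  Setup: `A → B` a ring map, `F` an
`A`-algebra, `V ⊆ F` an `A`-submodule.  `Γn` plays the role of `Γⁿ_A(F)`, `Γn'` that of
`Γⁿ_B(F ⊗_A B) ≅ Γⁿ_A(F) ⊗_A B`, and `φ : Γⁿ_A(F) → Γⁿ_B(F ⊗_A B)` the canonical
base-change homomorphism, which carries external products of degree-one divided powers to
external products of the images (`hφ`).

Conclusion: the extension `φ(I_V)·Γⁿ_B(F ⊗_A B)` equals the ideal of norms `I_{V_B}`
associated to the image `V_B` of `V ⊗_A B` in `F ⊗_A B`. -/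
theorem normIdeal_baseChange {A B F Γn Γn' : Type*} [CommRing A] [CommRing B] [Algebra A B]
    [CommRing F] [Algebra A F]
    [CommRing Γn] [Algebra A Γn] [CommRing Γn'] [Algebra B Γn'] {n : ℕ}
    (p1 : MultilinearMap A (fun _ : Fin n => F) Γn)
    (p1' : MultilinearMap B (fun _ : Fin n => F ⊗[A] B) Γn')
    (φ : Γn →+* Γn')
    (hφ : ∀ z : Fin n → F, φ (p1 z) = p1' fun i => z i ⊗ₜ[A] (1 : B))
    (V : Submodule A F) :
    Ideal.map φ (normIdeal p1 V) =
      normIdeal p1' (Submodule.span B ((fun v => v ⊗ₜ[A] (1 : B)) '' (V : Set F))) := by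
  set s : Set (F ⊗[A] B) := (fun v => v ⊗ₜ[A] (1 : B)) '' (V : Set F) with hs
  have key : ∀ v w : Fin n → F, φ (extDelta p1 v w) =
      extDelta p1' (fun i => v i ⊗ₜ[A] (1 : B)) (fun i => w i ⊗ₜ[A] (1 : B)) := by
    intro v w
    simp only [extDelta, map_sum, map_zsmul, hφ]
    refine Finset.sum_congr rfl fun σ _ => ?_
    congr 1
    congr 1
    funext i
    rw [Algebra.TensorProduct.tmul_mul_tmul, one_mul]
  apply le_antisymm
  · rw [Ideal.map_le_iff_le_comap, normIdeal, Ideal.span_le]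
    rintro t ⟨x, y, hx, hy, rfl⟩
    simp only [SetLike.mem_coe, Ideal.mem_comap, key]
    exact Ideal.subset_span ⟨_, _,
      fun i => Submodule.subset_span ⟨x i, hx i, rfl⟩,
      fun i => Submodule.subset_span ⟨y i, hy i, rfl⟩, rfl⟩
  · rw [normIdeal, Ideal.span_le]
    rintro t ⟨x, y, hx, hy, rfl⟩
    set J : Ideal Γn' := Ideal.map φ (normIdeal p1 V) with hJ
    -- base case: all entries pure tensors from V
    have base : ∀ x y : Fin n → F ⊗[A] B, (∀ i, x i ∈ s) → (∀ i, y i ∈ s) →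
        extDelta p1' x y ∈ J := by
      intro x y hx hy
      simp only [hs, Set.mem_image, SetLike.mem_coe] at hx hy
      choose v hv hveq using hx
      choose w hw hweq using hy
      have hxv : x = fun i => v i ⊗ₜ[A] (1 : B) := by funext i; rw [hveq i]
      have hyw : y = fun i => w i ⊗ₜ[A] (1 : B) := by funext i; rw [hweq i]
      rw [hxv, hyw, ← key]
      exact Ideal.mem_map_of_mem φ (Ideal.subset_span ⟨v, w, hv, hw, rfl⟩)
    -- extend in the first variable
    have step1 : ∀ y : Fin n → F ⊗[A] B, (∀ i, y i ∈ s) →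
        ∀ x : Fin n → F ⊗[A] B, (∀ i, x i ∈ Submodule.span B s) →
        extDelta p1' x y ∈ J := by
      intro y hy
      have := multilinear_mem_span (deltaFst p1' y) s (J.restrictScalars B)
        (fun x hx => by
          rw [Submodule.restrictScalars_mem, deltaFst_apply]
          exact base x y hx hy)
      intro x hx
      have h2 := this x hx
      rwa [Submodule.restrictScalars_mem, deltaFst_apply] at h2
    -- extend in the second variable
    have step2 : ∀ x : Fin n → F ⊗[A] B, (∀ i, x i ∈ Submodule.span B s) →
        ∀ y : Fin n → F ⊗[A] B, (∀ i, y i ∈ Submodule.span B s) →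
        extDelta p1' x y ∈ J := by
      intro x hx
      have := multilinear_mem_span (deltaSnd p1' x) s (J.restrictScalars B)
        (fun y hy => by
          rw [Submodule.restrictScalars_mem, deltaSnd_apply]
          exact step1 y hy x hx)
      intro y hy
      have h2 := this y hy
      rwa [Submodule.restrictScalars_mem, deltaSnd_apply] at h2
    exact step2 x hx y hy
end

section
/- Let F = A[T₁,…,T_r] be a polynomial ring and let V ⊂ F be the A-submodule spanned by monomials whose degree in each individual variable is less than n. Then the ideal of norms I_V ⊆ Γⁿ_A(F) equals the ideal of norms I_F associated to all of F. -/
/-!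
If `T_k^n` divides `x_j`, say `x_j = T_k^n b`, the product formula gives
`∑_{c=0}^{n} (-1)^c γᶜ(T_k) γ^{n-c}(1) ⋅ δ(x[j ↦ T_k^{n-c} b], y) = 0`: expanding each term as a sum
over `c`-subsets `S`, the terms of `S` and `S ∪ {j}` cancel. Hence `δ(x, y)` lies in the ideal
generated by norms of smaller total degree, and induction on the degree, multilinearity of `δ` and
the symmetry `δ(x, y) = δ(y, x)` reduce every norm to norms of monomials lying in `V`.
-/

open Finset MvPolynomial

theorem Finset.sum_powerset_eq_zero_of_insert {α M : Type*} [DecidableEq α] [AddCommGroup M]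
    {s : Finset α} {a : α} (ha : a ∈ s) (G : Finset α → M)
    (hG : ∀ t ⊆ s.erase a, G (insert a t) = -G t) :
    ∑ t ∈ s.powerset, G t = 0 := by
  rw [← insert_erase ha, sum_powerset_insert (notMem_erase a s), ← sum_add_distrib]
  exact sum_eq_zero fun t ht => by rw [hG t (mem_powerset.mp ht), add_neg_cancel]

section Norms

variable {A F Γn : Type*} [CommRing A] [CommRing F] [Algebra A F] [CommRing Γn] [Algebra A Γn]
  {n : ℕ}

/-- Proposition 1.7: how the internal product by `q c f = γᶜ(f) * γ^{n-c}(1)` acts on the external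
product `D = γ¹ * ⋯ * γ¹`. -/
def ProductFormula (q : ℕ → F → Γn) (D : MultilinearMap A (fun _ : Fin n => F) Γn) : Prop :=
  ∀ c, c ≤ n → ∀ (f : F) (w : Fin n → F),
    q c f * D w = ∑ S ∈ univ.powersetCard c, D fun i => (if i ∈ S then f else 1) * w i

section ProductFormula

variable {q : ℕ → F → Γn} {D : MultilinearMap A (fun _ : Fin n => F) Γn}

theorem ProductFormula.zero_mul (hD : ProductFormula q D) (f : F) (w : Fin n → F) :
    q 0 f * D w = D w := by
  simp [hD 0 n.zero_le]

/-- Pairing `S` with `insert j S` cancels the terms of the left-hand side expanded by the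
product formula. -/
theorem ProductFormula.sum_neg_one_pow_smul_update_eq_zero
    (hD : ProductFormula q D) (w : Fin n → F) (j : Fin n) (f b : F) :
    ∑ c ∈ range (n + 1), (-1 : ℤ) ^ c • (q c f * D (Function.update w j (f ^ (n - c) * b))) =
      0 := by
  set G : Finset (Fin n) → Γn := fun S => (-1 : ℤ) ^ #S •
    D fun i => (if i ∈ S then f else 1) * Function.update w j (f ^ (n - #S) * b) i
  have hexpand : ∀ c ∈ range (n + 1), (-1 : ℤ) ^ c •
      (q c f * D (Function.update w j (f ^ (n - c) * b))) = ∑ S ∈ univ.powersetCard c, G S := by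
    intro c hc
    rw [hD c (Nat.lt_succ_iff.mp (mem_range.mp hc)), smul_sum]
    exact sum_congr rfl fun S hS => by simp only [G, (mem_powersetCard.mp hS).2]
  have hpowerset := sum_powerset univ G
  rw [card_univ, Fintype.card_fin] at hpowerset
  rw [sum_congr rfl hexpand, ← hpowerset]
  refine sum_powerset_eq_zero_of_insert (mem_univ j) G fun t ht => ?_
  have hjt : j ∉ t := fun h => notMem_erase j univ (ht h)
  have hcard : #t < n := (card_le_card ht).trans_lt (by simp [card_erase_of_mem, j.pos])
  have hshift : (fun i => (if i ∈ insert j t then f else 1) *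
        Function.update w j (f ^ (n - (#t + 1)) * b) i) =
      fun i => (if i ∈ t then f else 1) * Function.update w j (f ^ (n - #t) * b) i := by
    funext i
    rcases eq_or_ne i j with rfl | hij
    · rw [if_pos (mem_insert_self i t), if_neg hjt, Function.update_self, Function.update_self,
        one_mul, ← mul_assoc, ← pow_succ', Nat.sub_add_eq, Nat.sub_add_cancel (by omega)]
    · simp only [mem_insert, hij, false_or, Function.update_of_ne hij]
  simp only [G, card_insert_of_notMem hjt, hshift, pow_succ, mul_neg_one, neg_smul]

theorem ProductFormula.mem_of_update_pow_mul (hD : ProductFormula q D) (I : Ideal Γn)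
    (w : Fin n → F) (j : Fin n) (f b : F)
    (h : ∀ c ∈ Icc 1 n, D (Function.update w j (f ^ (n - c) * b)) ∈ I) :
    D (Function.update w j (f ^ n * b)) ∈ I := by
  have hsum := hD.sum_neg_one_pow_smul_update_eq_zero w j f b
  rw [sum_range_succ', pow_zero, one_smul, hD.zero_mul, Nat.sub_zero] at hsum
  rw [eq_neg_of_add_eq_zero_right hsum]
  refine neg_mem (sum_mem fun c hc => zsmul_mem (I.mul_mem_left _ (h (c + 1) ?_)) _)
  simp only [mem_Icc, mem_range] at hc ⊢
  omega

end ProductFormula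

theorem Function.update_mul_right {ι M : Type*} [DecidableEq ι] [Mul M] (x : ι → M) (j : ι)
    (g : M) (z : ι → M) :
    (fun i => update x j g i * z i) = update (fun i => x i * z i) j (g * z j) := by
  funext i
  rcases eq_or_ne i j with rfl | hij
  · simp
  · simp [update_of_ne hij]

section ExtDelta

variable (p1 : MultilinearMap A (fun _ : Fin n => F) Γn)

theorem extDelta_comm (hsym : ∀ (σ : Equiv.Perm (Fin n)) (z : Fin n → F), p1 (z ∘ σ) = p1 z)
    (x y : Fin n → F) : extDelta p1 x y = extDelta p1 y x := by
  refine Fintype.sum_equiv (Equiv.inv (Equiv.Perm (Fin n))) _ _ fun σ => ?_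
  have hcomp : (fun i => y i * x (σ⁻¹ i)) ∘ σ = fun i => x i * y (σ i) := by
    funext i
    simp [mul_comm]
  rw [Equiv.inv_apply, Equiv.Perm.sign_inv, ← hcomp, hsym]

theorem extDelta_mem_normIdeal {V : Submodule A F} {x y : Fin n → F} (hx : ∀ i, x i ∈ V)
    (hy : ∀ i, y i ∈ V) : extDelta p1 x y ∈ normIdeal p1 V :=
  Ideal.subset_span ⟨x, y, hx, hy, rfl⟩

theorem normIdeal_mono {V W : Submodule A F} (hVW : V ≤ W) : normIdeal p1 V ≤ normIdeal p1 W :=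
  Ideal.span_mono fun _ ⟨x, y, hx, hy, h⟩ => ⟨x, y, fun i => hVW (hx i), fun i => hVW (hy i), h⟩

noncomputable def extDeltaLeft (y : Fin n → F) : MultilinearMap A (fun _ : Fin n => F) Γn where
  toFun x := extDelta p1 x y
  map_update_add' x j a b := by
    simp only [extDelta, Function.update_mul_right, add_mul, MultilinearMap.map_update_add, smul_add,
      sum_add_distrib]
  map_update_smul' x j c a := by
    simp only [extDelta, Function.update_mul_right, smul_mul_assoc, MultilinearMap.map_update_smul,
      smul_sum]
    exact sum_congr rfl fun σ _ => smul_comm _ _ _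

theorem extDeltaLeft_apply (y x : Fin n → F) : extDeltaLeft p1 y x = extDelta p1 x y := rfl

variable {p1} in
theorem ProductFormula.extDeltaLeft {q : ℕ → F → Γn} (hq : ProductFormula q p1) (y : Fin n → F) :
    ProductFormula q (extDeltaLeft p1 y) := by
  intro c hc f w
  simp only [extDeltaLeft_apply, extDelta, mul_sum, mul_smul_comm, hq c hc, smul_sum, mul_assoc]
  exact sum_comm

end ExtDelta

theorem MultilinearMap.map_mem_of_forall_monomial {ι σ M : Type*} [Fintype ι]
    [AddCommMonoid M] [Module A M] (D : MultilinearMap A (fun _ : ι => MvPolynomial σ A) M)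
    (S : Submodule A M) (h : ∀ e : ι → σ →₀ ℕ, D (fun i => monomial (e i) 1) ∈ S)
    (w : ι → MvPolynomial σ A) : D w ∈ S := by
  classical
  have hw : w = fun i => ∑ v ∈ (w i).support, coeff v (w i) • monomial v (1 : A) := by
    funext i
    conv_lhs => rw [(w i).as_sum]
    exact sum_congr rfl fun v _ => by rw [smul_monomial, smul_eq_mul, mul_one]
  rw [hw, D.map_sum_finset]
  exact sum_mem fun e _ => by
    rw [D.map_smul_univ]
    exact S.smul_mem _ (h fun i => e i)

section Monomials

variable {r : ℕ} {q : ℕ → MvPolynomial (Fin r) A → Γn}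
  {D : MultilinearMap A (fun _ : Fin n => MvPolynomial (Fin r) A) Γn}

/-- If `T_k^n` divides the `j`-th monomial, the product formula with `f = T_k` writes `D` of it
as a combination of `D`-values of monomials of strictly smaller total degree. -/
theorem ProductFormula.monomial_mem_of_small (hD : ProductFormula q D) (I : Ideal Γn)
    (hsmall : ∀ d : Fin n → Fin r →₀ ℕ, (∀ i k, d i k < n) → D (fun i => monomial (d i) 1) ∈ I)
    (d : Fin n → Fin r →₀ ℕ) : D (fun i => monomial (d i) 1) ∈ I := by
  induction hN : ∑ i, (d i).degree using Nat.strong_induction_on generalizing d with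
  | _ N ih =>
  by_cases hd : ∀ i k, d i k < n
  · exact hsmall d hd
  simp only [not_forall, not_lt] at hd
  obtain ⟨j, k, hjk⟩ := hd
  set e := d j - Finsupp.single k n
  have hdj : Finsupp.single k n + e = d j := add_tsub_cancel_of_le (Finsupp.single_le_iff.mpr hjk)
  have hupdate : ∀ a, (fun i => monomial (Function.update d j (Finsupp.single k a + e) i) (1 : A))
      = Function.update (fun i => monomial (d i) 1) j (X k ^ a * monomial e 1) := by
    intro a
    funext i
    rw [Function.apply_update (fun _ v => monomial v (1 : A)), monomial_single_add]
  have hdegree : ∀ a, ∑ i, (Function.update d j (Finsupp.single k a + e) i).degree + n =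
      N + a := by
    intro a
    rw [← hN, ← add_sum_erase _ _ (mem_univ j), ← add_sum_erase _ _ (mem_univ j),
      Function.update_self, ← hdj, map_add, map_add, Finsupp.degree_single,
      Finsupp.degree_single,
      sum_congr rfl fun i hi => by rw [Function.update_of_ne (ne_of_mem_erase hi)]]
    omega
  have hmem := hD.mem_of_update_pow_mul I _ j (X k) (monomial e 1) fun c hc => by
    obtain ⟨hc1, hcn⟩ := mem_Icc.mp hc
    rw [← hupdate]
    exact ih _ (by have := hdegree (n - c); omega) _ rfl
  rwa [← monomial_single_add, hdj, Function.update_eq_self] at hmem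

theorem ProductFormula.mem_of_small (hD : ProductFormula q D) (I : Ideal Γn)
    (hsmall : ∀ d : Fin n → Fin r →₀ ℕ, (∀ i k, d i k < n) → D (fun i => monomial (d i) 1) ∈ I)
    (w : Fin n → MvPolynomial (Fin r) A) : D w ∈ I :=
  D.map_mem_of_forall_monomial (I.restrictScalars A) (hD.monomial_mem_of_small I hsmall) w

end Monomials

end Norms

/-- `Γn` is `Γⁿ_A(F)` with its internal multiplication and `p1` the external product of `n`
degree-one divided powers; `hq` is `ProductFormula q p1`. -/
theorem normIdeal_small_monomials {A Γn : Type*} [CommRing A]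
    [CommRing Γn] [Algebra A Γn] {n : ℕ} (r : ℕ)
    (p1 : MultilinearMap A (fun _ : Fin n => MvPolynomial (Fin r) A) Γn)
    (hsym : ∀ (σ : Equiv.Perm (Fin n)) (z : Fin n → MvPolynomial (Fin r) A),
      p1 (z ∘ σ) = p1 z)
    (q : ℕ → MvPolynomial (Fin r) A → Γn)
    (hq : ∀ (c : ℕ), c ≤ n → ∀ (f : MvPolynomial (Fin r) A) (w : Fin n → MvPolynomial (Fin r) A),
      q c f * p1 w =
        ∑ S ∈ Finset.univ.powersetCard c,
          p1 fun i => (if i ∈ S then f else 1) * w i) :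
    normIdeal p1 (Submodule.span A
        {m : MvPolynomial (Fin r) A |
          ∃ d : Fin r →₀ ℕ, (∀ i, d i < n) ∧ m = MvPolynomial.monomial d 1}) =
      normIdeal p1 (⊤ : Submodule A (MvPolynomial (Fin r) A)) := by
  have hp1 : ProductFormula q p1 := hq
  set V := Submodule.span A
    {m : MvPolynomial (Fin r) A | ∃ d : Fin r →₀ ℕ, (∀ i, d i < n) ∧ m = monomial d 1}
  have hV : ∀ d : Fin r →₀ ℕ, (∀ k, d k < n) → monomial d 1 ∈ V :=
    fun d hd => Submodule.subset_span ⟨d, hd, rfl⟩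
  have hsmall : ∀ (x : Fin n → MvPolynomial (Fin r) A) (e : Fin n → Fin r →₀ ℕ),
      (∀ i k, e i k < n) → extDelta p1 x (fun i => monomial (e i) 1) ∈ normIdeal p1 V :=
    fun x e he => (hp1.extDeltaLeft _).mem_of_small _
      (fun d hd => extDelta_mem_normIdeal p1 (fun i => hV _ (hd i)) (fun i => hV _ (he i))) x
  refine le_antisymm (normIdeal_mono p1 le_top) (Ideal.span_le.mpr ?_)
  rintro _ ⟨x, y, -, -, rfl⟩
  rw [SetLike.mem_coe, extDelta_comm p1 hsym]
  exact (hp1.extDeltaLeft x).mem_of_small _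
    (fun e he => by rw [extDeltaLeft_apply, extDelta_comm p1 hsym]; exact hsmall x e he) y
end

section
/- Let F be an A-algebra, and let α_n : Γⁿ_A(F) → TSⁿ_A(F) be the A-algebra homomorphism with α_n(γⁿ(x)) = x ⊗ ⋯ ⊗ x. Then for any 2n elements x = x₁,…,xₙ and y = y₁,…,yₙ of F, α_n(δ(x,y)) = ν(x)·ν(y), where ν(x) = Σ_{σ∈Sₙ}(-1)^{|σ|} x_{σ(1)} ⊗ ⋯ ⊗ x_{σ(n)}. -/
open scoped TensorProduct

/-- The norm vector `ν(x) = ∑_{σ ∈ Sₙ} (-1)^{|σ|} x_{σ(1)} ⊗ ⋯ ⊗ x_{σ(n)} ∈ Tⁿ_A F`. -/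
noncomputable def normVector (A : Type*) {F : Type*} [CommRing A] [CommRing F] [Algebra A F]
    {n : ℕ} (x : Fin n → F) : ⨂[A] (_ : Fin n), F :=
  ∑ σ : Equiv.Perm (Fin n),
    ((Equiv.Perm.sign σ : ℤ)) • PiTensorProduct.tprod A (fun i => x (σ i))

/-- **Proposition 4.4.**  Setup: `Γn` is `Γⁿ_A(F)` (internal multiplication), `p1` the
external product of `n` degree-one divided powers, and `α : Γⁿ_A(F) → Tⁿ_A(F)` the
`A`-algebra homomorphism `α̃` (the canonical map `αₙ` into the symmetric tensors,
composed with the inclusion into the full tensor power), determined on external products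
of degree-one divided powers by the shuffle formula `hα`.

Conclusion: `α(δ(x,y)) = ν(x) ⋅ ν(y)`. -/
theorem alpha_delta_eq_normVector_mul {A F Γn : Type*} [CommRing A] [CommRing F]
    [Algebra A F] [CommRing Γn] [Algebra A Γn] {n : ℕ}
    (p1 : MultilinearMap A (fun _ : Fin n => F) Γn)
    (α : Γn →ₐ[A] (⨂[A] (_ : Fin n), F))
    (hα : ∀ z : Fin n → F,
      α (p1 z) = ∑ σ : Equiv.Perm (Fin n), PiTensorProduct.tprod A (fun i => z (σ i)))
    (x y : Fin n → F) :
    α (extDelta p1 x y) = normVector A x * normVector A y := by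
  simp only [extDelta, normVector, zsmul_eq_mul, map_sum, map_mul, map_intCast, hα,
    Finset.mul_sum, Finset.sum_mul]
  rw [← Finset.sum_product', ← Finset.sum_product']
  refine Fintype.sum_equiv
    ⟨fun p => (p.1 * p.2, p.2), fun p => (p.1 * p.2⁻¹, p.2), fun p => by simp [mul_assoc],
      fun p => by simp [mul_assoc]⟩ _ _ (fun p => ?_)
  obtain ⟨σ, τ⟩ := p
  simp only [Equiv.coe_fn_mk, map_mul, PiTensorProduct.tprod_mul_tprod]
  push_cast
  rw [mul_mul_mul_comm]
  congr 1
  · rw [mul_comm, ← Int.cast_mul, ← Int.cast_mul, ← Units.val_mul, ← Units.val_mul]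
    congr 2
    rw [mul_assoc, ← sq, Int.units_sq, mul_one]
  · rw [PiTensorProduct.tprod_mul_tprod]
    exact congrArg _ (funext fun i => by
      simp only [Pi.mul_apply, Function.comp_apply])
end

section
/- Let F be an A-algebra, let α̃ : Γⁿ_A(F) → Tⁿ_A(F) be the composition of α_n with the inclusion of symmetric tensors, let I ⊆ Tⁿ_A(F) be the extension of the ideal of norms I_F under α̃, and let J ⊆ Tⁿ_A(F) be the ideal of the union of the pairwise diagonals. Then √I = √J. -/
open scoped TensorProduct

/-- `y_{[j]} ∈ Tⁿ_A F`: the elementary tensor with `y` in the `j`-th slot, `1` elsewhere. -/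
noncomputable def slot (A : Type*) {F : Type*} [CommRing A] [CommRing F] [Algebra A F]
    {n : ℕ} (y : F) (j : Fin n) : ⨂[A] (_ : Fin n), F :=
  PiTensorProduct.tprod A (fun k => if k = j then y else 1)

/-!
Write `ν(x) = ∑_σ sgn σ • x_{σ 1} ⊗ ⋯ ⊗ x_{σ n}` (the alternatization of `tprod`), so that the
shuffle formula gives `α̃ (δ(x,y)) = ν(x) ν(y)`. Since `x_{σ 1} ⊗ ⋯ ⊗ x_{σ n}` is the product of
the slots `(x_{σ k})_{[k]}`, any ring hom `ψ` sends `ν(x)` to the determinant `det (ψ (x_i)_{[k]})`.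
Modulo the `(i,j)`-diagonal the columns `i` and `j` of that matrix agree, so `ν(x) ∈ J` and `I ⊆ J`.
Conversely a prime `P ⊇ I` contains every `ν(x)`; in `Frac(T/P)` the characters `z ↦ z_{[k]}` of
`F` then have all these determinants zero, so by Dedekind's independence of characters two of them
coincide, i.e. `P` contains one of the diagonal ideals, hence `J`.
-/

theorem LinearIndependent.exists_det_eval_ne_zero {G K : Type*} [Field K] {n : ℕ}
    {v : Fin n → G → K} (hv : LinearIndependent K v) :
    ∃ x : Fin n → G, (Matrix.of fun i k => v k (x i)).det ≠ 0 := by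
  -- The evaluation vectors `(v k a)_k` span `K^n`, so some `n` of them form a basis.
  obtain ⟨κ, a, -, hspan, hli⟩ := exists_linearIndependent' K (flip v)
  rw [span_flip_eq_top_iff_linearIndependent.mpr hv] at hspan
  let b := Module.Basis.mk hli hspan.ge
  let e := b.indexEquiv (Pi.basisFun K (Fin n))
  refine ⟨a ∘ e.symm, ?_⟩
  have := (Pi.basisFun K (Fin n)).isUnit_det (b.reindex e)
  rw [Pi.basisFun_det_apply] at this
  convert this.ne_zero using 3
  ext i k
  simp [b, flip]

section TensorPower

noncomputable def diagonalIdeal (A : Type*) {F : Type*} [CommRing A] [CommRing F] [Algebra A F]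
    {n : ℕ} (i j : Fin n) : Ideal (⨂[A] (_ : Fin n), F) :=
  Ideal.span {t | ∃ z : F, t = slot A z i - slot A z j}

variable {A F : Type*} [CommRing A] [CommRing F] [Algebra A F] {n : ℕ}

theorem slot_eq_singleAlgHom (y : F) (j : Fin n) :
    slot A y j = PiTensorProduct.singleAlgHom (R := A) (A := fun _ => F) j y := by
  rw [slot, PiTensorProduct.singleAlgHom_apply]
  congr 1
  ext k
  simp [Pi.mulSingle_apply]

theorem tprod_eq_prod_slot (w : Fin n → F) :
    PiTensorProduct.tprod A w = ∏ k, slot A (w k) k := by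
  simp only [slot_eq_singleAlgHom, PiTensorProduct.singleAlgHom_apply, MonoidHom.mulSingle_apply,
    ← PiTensorProduct.tprod_prod, Finset.univ_prod_mulSingle]

theorem map_alternatization_tprod {K : Type*} [CommRing K] (ψ : (⨂[A] (_ : Fin n), F) →+* K)
    (x : Fin n → F) :
    ψ ((PiTensorProduct.tprod A).alternatization x) =
      (Matrix.of fun i k => ψ (slot A (x i) k)).det := by
  simp [MultilinearMap.alternatization_apply, Matrix.det_apply', tprod_eq_prod_slot, map_prod,
    Units.smul_def]

theorem alternatization_tprod_mem_diagonalIdeal {i j : Fin n} (hij : i ≠ j) (x : Fin n → F) :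
    (PiTensorProduct.tprod A).alternatization x ∈ diagonalIdeal A i j := by
  rw [← Ideal.Quotient.eq_zero_iff_mem, map_alternatization_tprod]
  exact Matrix.det_zero_of_column_eq hij fun k =>
    Ideal.Quotient.eq.mpr (Ideal.subset_span ⟨x k, rfl⟩)

theorem alternatization_tprod_mul_alternatization_tprod (x y : Fin n → F) :
    (PiTensorProduct.tprod A).alternatization x * (PiTensorProduct.tprod A).alternatization y =
      ∑ σ : Equiv.Perm (Fin n), (Equiv.Perm.sign σ : ℤ) •
        ∑ τ : Equiv.Perm (Fin n), PiTensorProduct.tprod A (fun i => x (τ i) * y (σ (τ i))) := by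
  simp only [MultilinearMap.alternatization_apply, MultilinearMap.domDomCongr_apply,
    Units.smul_def, zsmul_eq_mul]
  rw [Finset.sum_mul_sum]
  simp only [Finset.mul_sum]
  refine Eq.trans ?_ Finset.sum_comm
  refine Finset.sum_congr rfl fun τ _ => ?_
  rw [← Equiv.sum_comp (Equiv.mulRight τ)]
  refine Finset.sum_congr rfl fun σ _ => ?_
  have hsign : Equiv.Perm.sign τ * Equiv.Perm.sign (σ * τ) = Equiv.Perm.sign σ := by
    rw [Equiv.Perm.sign_mul, mul_left_comm, Int.units_mul_self, mul_one]
  simp only [Equiv.coe_mulRight]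
  rw [mul_mul_mul_comm, ← Int.cast_mul, ← Units.val_mul, hsign, PiTensorProduct.tprod_mul_tprod]
  rfl

theorem exists_map_slot_eq_of_map_alternatization_eq_zero {K : Type*} [Field K]
    (ψ : (⨂[A] (_ : Fin n), F) →+* K)
    (h : ∀ x : Fin n → F, ψ ((PiTensorProduct.tprod A).alternatization x) = 0) :
    ∃ i j : Fin n, i ≠ j ∧ ∀ z : F, ψ (slot A z i) = ψ (slot A z j) := by
  by_contra! hne
  let χ : Fin n → F →* K := fun k =>
    (ψ.comp (PiTensorProduct.singleAlgHom (R := A) (A := fun _ => F) k).toRingHom).toMonoidHom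
  have hχ : ∀ k z, χ k z = ψ (slot A z k) := fun k z => by simp [χ, slot_eq_singleAlgHom]
  have hχ_inj : Function.Injective χ := fun i j hij => by
    by_contra hij'
    obtain ⟨z, hz⟩ := hne i j hij'
    exact hz (by rw [← hχ, ← hχ, hij])
  obtain ⟨x, hx⟩ := ((linearIndependent_monoidHom F K).comp χ hχ_inj).exists_det_eval_ne_zero
  simp only [Function.comp_apply, hχ] at hx
  exact hx (map_alternatization_tprod ψ x ▸ h x)

theorem exists_diagonalIdeal_le_of_isPrime (P : Ideal (⨂[A] (_ : Fin n), F)) [P.IsPrime]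
    (h : ∀ x : Fin n → F, (PiTensorProduct.tprod A).alternatization x ∈ P) :
    ∃ i j : Fin n, i ≠ j ∧ diagonalIdeal A i j ≤ P := by
  let ψ := (algebraMap (_ ⧸ P) (FractionRing (_ ⧸ P))).comp (Ideal.Quotient.mk P)
  have hψ : ∀ t, ψ t = 0 ↔ t ∈ P := fun t =>
    (IsFractionRing.to_map_eq_zero_iff (R := _ ⧸ P)).trans Ideal.Quotient.eq_zero_iff_mem
  obtain ⟨i, j, hij, heq⟩ :=
    exists_map_slot_eq_of_map_alternatization_eq_zero ψ fun x => (hψ _).mpr (h x)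
  refine ⟨i, j, hij, Ideal.span_le.mpr ?_⟩
  rintro _ ⟨z, rfl⟩
  exact (hψ _).mp (by rw [map_sub, heq, sub_self])

variable {Γn : Type*} [CommRing Γn] [Algebra A Γn]
  (p1 : MultilinearMap A (fun _ : Fin n => F) Γn) (α : Γn →ₐ[A] (⨂[A] (_ : Fin n), F))
  (hα : ∀ z : Fin n → F,
    α (p1 z) = ∑ σ : Equiv.Perm (Fin n), PiTensorProduct.tprod A (fun i => z (σ i)))
include hα

theorem map_extDelta (x y : Fin n → F) :
    α (extDelta p1 x y) =
      (PiTensorProduct.tprod A).alternatization x * (PiTensorProduct.tprod A).alternatization y := by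
  simp only [extDelta, map_sum, map_zsmul, hα, alternatization_tprod_mul_alternatization_tprod]

theorem map_normIdeal_le_iInf_diagonalIdeal :
    Ideal.map α.toRingHom (normIdeal p1 (⊤ : Submodule A F)) ≤
      ⨅ (i : Fin n) (j : Fin n) (_ : i ≠ j), diagonalIdeal A i j := by
  rw [normIdeal, Ideal.map_span, Ideal.span_le]
  rintro _ ⟨_, ⟨x, y, -, -, rfl⟩, rfl⟩
  simp only [SetLike.mem_coe, Submodule.mem_iInf]
  intro i j hij
  rw [AlgHom.toRingHom_eq_coe, RingHom.coe_coe, map_extDelta p1 α hα]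
  exact Ideal.mul_mem_right _ _ (alternatization_tprod_mem_diagonalIdeal hij x)

theorem iInf_diagonalIdeal_le_of_isPrime (P : Ideal (⨂[A] (_ : Fin n), F)) [hP : P.IsPrime]
    (hle : Ideal.map α.toRingHom (normIdeal p1 (⊤ : Submodule A F)) ≤ P) :
    ⨅ (i : Fin n) (j : Fin n) (_ : i ≠ j), diagonalIdeal A i j ≤ P := by
  have halt (x : Fin n → F) : (PiTensorProduct.tprod A).alternatization x ∈ P := by
    have hsq := hle (Ideal.mem_map_of_mem α.toRingHom
      (Ideal.subset_span ⟨x, x, fun _ => trivial, fun _ => trivial, rfl⟩))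
    rw [AlgHom.toRingHom_eq_coe, RingHom.coe_coe, map_extDelta p1 α hα] at hsq
    exact (hP.mem_or_mem hsq).elim id id
  obtain ⟨i, j, hij, hijP⟩ := exists_diagonalIdeal_le_of_isPrime P halt
  exact iInf_le_of_le i (iInf_le_of_le j (iInf_le_of_le hij hijP))

end TensorPower

/-- **Corollary 4.5.**  Setup: `α : Γⁿ_A(F) → Tⁿ_A(F)` is `α̃`, the canonical map into
symmetric tensors composed with the inclusion into the tensor power, determined on
external products of degree-one divided powers by the shuffle formula `hα`.  Let
`I ⊆ Tⁿ_A(F)` be the extension of the ideal of norms `I_F` along `α̃`, and let `J` be the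
ideal of the union of the pairwise diagonals, i.e. the intersection over all pairs
`i ≠ j` of the ideals generated by the differences `x_{[i]} - x_{[j]}`, `x ∈ F`.

Conclusion: `√I = √J`. -/
theorem radical_norm_eq_radical_diagonal {A F Γn : Type*} [CommRing A] [CommRing F]
    [Algebra A F] [CommRing Γn] [Algebra A Γn] {n : ℕ}
    (p1 : MultilinearMap A (fun _ : Fin n => F) Γn)
    (α : Γn →ₐ[A] (⨂[A] (_ : Fin n), F))
    (hα : ∀ z : Fin n → F,
      α (p1 z) = ∑ σ : Equiv.Perm (Fin n), PiTensorProduct.tprod A (fun i => z (σ i))) :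
    (Ideal.map α.toRingHom (normIdeal p1 (⊤ : Submodule A F))).radical =
      (⨅ (i : Fin n) (j : Fin n) (_ : i ≠ j),
        Ideal.span {t | ∃ z : F, t = slot A z i - slot A z j}).radical := by
  refine le_antisymm (Ideal.radical_mono (map_normIdeal_le_iInf_diagonalIdeal p1 α hα)) ?_
  rw [Ideal.radical_le_radical_iff, Ideal.radical_eq_sInf]
  exact le_sInf fun P ⟨hle, _⟩ => iInf_diagonalIdeal_le_of_isPrime p1 α hα P hle
end

section
/- Let A = K be a field of characteristic zero and F = K[T₁,…,T_r]. For n > 0, the K-algebra Γⁿ_K(F) (with its internal multiplication) is generated by the elements γ¹(m) * γ^{n-1}(1) where m ranges over monomials of total degree at most n. -/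
/-!
Averaging over `Sₙ` (possible in characteristic zero) writes a symmetric tensor as a combination
of symmetrisations of pure tensors `x₁ ⊗ ⋯ ⊗ xₙ`, and such a symmetrisation is a sum over
injections `g`. Multiplying a sum over injections by a power sum `P(a)` either puts `a` into a free
slot or merges it into an occupied one, so by induction these sums are polynomials in power sums.

For a monomial `m` of degree `> n`, split `m = a₀ ⋯ aₙ` into factors of positive degree. The sum
over injections `Fin (n + 1) → Fin n` is empty, while modulo power sums of lower degree it equals
`(-1)ⁿ n! P(m)`; hence `P(m)` is a polynomial in power sums of monomials of lower degree.
-/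

open scoped TensorProduct

/-- The power sum `P(m) = m ⊗ 1 ⊗ ⋯ ⊗ 1 + ⋯ + 1 ⊗ ⋯ ⊗ 1 ⊗ m ∈ Tⁿ_K F`, the image of
`γ¹(m) * γ^{n-1}(1)` under the isomorphism `αₙ : Γⁿ_K(F) ≅ TSⁿ_K(F)` (which is an
isomorphism since `K` has characteristic zero). -/
noncomputable def powerSum (K : Type*) {F : Type*} [CommRing K] [CommRing F] [Algebra K F]
    (n : ℕ) (m : F) : ⨂[K] (_ : Fin n), F :=
  ∑ j : Fin n, PiTensorProduct.tprod K (fun k => if k = j then m else 1)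

open Finset PiTensorProduct

theorem Fintype.sum_compl_range_add_sum {ι κ β : Type*} [Fintype ι] [DecidableEq ι] [Fintype κ]
    [AddCommMonoid β] (g : κ ↪ ι) (f : ι → β) :
    ∑ j : {j // j ∉ Set.range g}, f j + ∑ i, f (g i) = ∑ j, f j := by
  rw [← Finset.sum_compl_add_sum (univ.map g), Finset.sum_map]
  congr 1
  exact (Finset.sum_subtype _ (by simp) f).symm

theorem Fin.prod_update_tail {M : Type*} [CommMonoid M] {k : ℕ} (a : Fin (k + 1) → M)
    (i₀ : Fin k) : ∏ i, Function.update (Fin.tail a) i₀ (a 0 * a i₀.succ) i = ∏ i, a i := by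
  rw [Finset.prod_update_of_mem (mem_univ i₀), Finset.sdiff_singleton_eq_erase, mul_assoc,
    Fin.prod_univ_succ]
  exact congrArg _ (Finset.mul_prod_erase univ (Fin.tail a) (mem_univ i₀))

section EmbeddingSum

variable {M A ι : Type*} [CommMonoid M] [CommSemiring A] [Fintype ι] (u : ι → M →* A)

/-- For `u j` the inclusion of the `j`-th tensor factor this is the augmented monomial symmetric
function `∑_g ⨂_j ∏_{g i = j} a i`. -/
noncomputable def embeddingSum {k : ℕ} (a : Fin k → M) : A :=
  ∑ g : Fin k ↪ ι, ∏ i, u (g i) (a i)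

theorem embeddingSum_zero (a : Fin 0 → M) : embeddingSum u a = 1 := by
  simp [embeddingSum]

theorem embeddingSum_of_card_lt {k : ℕ} (hk : Fintype.card ι < k) (a : Fin k → M) :
    embeddingSum u a = 0 := by
  have : IsEmpty (Fin k ↪ ι) := Function.Embedding.isEmpty_of_card_lt (by simpa using hk)
  simp [embeddingSum]

/-- The factor `u j (a 0)` either occupies a slot `j` outside the range of `g`, or it is merged
into the slot of some `a i`. -/
theorem sum_mul_embeddingSum {k : ℕ} (a : Fin (k + 1) → M) :
    (∑ j, u j (a 0)) * embeddingSum u (Fin.tail a) =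
      embeddingSum u a + ∑ i, embeddingSum u (Function.update (Fin.tail a) i (a 0 * a i.succ)) := by
  classical
  have new_slot : ∑ g : Fin k ↪ ι, ∑ j : {j // j ∉ Set.range g},
      u j (a 0) * ∏ i, u (g i) (Fin.tail a i) = embeddingSum u a := by
    rw [embeddingSum, ← (Equiv.embeddingFinSucc k ι).symm.sum_comp, Fintype.sum_sigma]
    refine Fintype.sum_congr _ _ fun g => Fintype.sum_congr _ _ fun j => ?_
    simp [Fin.prod_univ_succ, Fin.tail]
  have merged_slot (g : Fin k ↪ ι) (i₀ : Fin k) :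
      u (g i₀) (a 0) * ∏ i, u (g i) (Fin.tail a i) =
        ∏ i, u (g i) (Function.update (Fin.tail a) i₀ (a 0 * a i₀.succ) i) := by
    simp only [Function.apply_update (fun i => u (g i)), Finset.prod_update_of_mem (mem_univ i₀),
      map_mul, ← Finset.mul_prod_erase univ _ (mem_univ i₀), Finset.sdiff_singleton_eq_erase,
      Fin.tail, mul_assoc]
  calc (∑ j, u j (a 0)) * embeddingSum u (Fin.tail a)
      = ∑ g : Fin k ↪ ι, ∑ j, u j (a 0) * ∏ i, u (g i) (Fin.tail a i) := by
        rw [embeddingSum, Finset.sum_mul_sum, Finset.sum_comm]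
    _ = embeddingSum u a +
          ∑ i₀, ∑ g : Fin k ↪ ι, u (g i₀) (a 0) * ∏ i, u (g i) (Fin.tail a i) := by
        rw [Finset.sum_congr rfl fun g _ => (Fintype.sum_compl_range_add_sum g
          fun j => u j (a 0) * ∏ i, u (g i) (Fin.tail a i)).symm, Finset.sum_add_distrib, new_slot]
        exact congrArg _ Finset.sum_comm
    _ = _ := by simp only [merged_slot, embeddingSum]

end EmbeddingSum

section EmbeddingSumRing

variable {M A ι : Type*} [CommMonoid M] [CommRing A] [Fintype ι] (u : ι → M →* A)

theorem embeddingSum_succ {k : ℕ} (a : Fin (k + 1) → M) :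
    embeddingSum u a = (∑ j, u j (a 0)) * embeddingSum u (Fin.tail a) -
      ∑ i, embeddingSum u (Function.update (Fin.tail a) i (a 0 * a i.succ)) := by
  rw [sum_mul_embeddingSum, add_sub_cancel_right]

theorem embeddingSum_mem {B : Subring A} (hB : ∀ x, ∑ j, u j x ∈ B) {k : ℕ} (a : Fin k → M) :
    embeddingSum u a ∈ B := by
  induction k with
  | zero => exact embeddingSum_zero u a ▸ B.one_mem
  | succ k ih =>
    rw [embeddingSum_succ]
    exact sub_mem (mul_mem (hB _) (ih _)) (sum_mem fun i _ => ih _)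

/-- Each of the `k + 1` merged terms of `embeddingSum_succ` is, by induction, `(-1)ᵏ k!` times
the same power sum, whence the sign and the factorial. -/
theorem embeddingSum_sub_mem {B : Subring A} (deg : M → ℕ)
    (deg_mul : ∀ x y, deg (x * y) = deg x + deg y) {k : ℕ} (a : Fin (k + 1) → M)
    (ha : ∀ i, 0 < deg (a i)) (hB : ∀ x, deg x < deg (∏ i, a i) → ∑ j, u j x ∈ B) :
    embeddingSum u a - ((-1) ^ k * k.factorial : ℤ) • ∑ j, u j (∏ i, a i) ∈ B := by
  induction k with
  | zero => simp [embeddingSum_succ, embeddingSum_zero]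
  | succ k ih =>
    have deg_prod {m : ℕ} (b : Fin (m + 1) → M) :
        deg (∏ i, b i) = deg (b 0) + deg (∏ i, Fin.tail b i) := by
      rw [Fin.prod_univ_succ, deg_mul]
      rfl
    have tail_lt : deg (∏ i, Fin.tail a i) < deg (∏ i, a i) := by
      rw [deg_prod a]
      exact Nat.lt_add_of_pos_left (ha 0)
    have head_lt : deg (a 0) < deg (∏ i, a i) := by
      rw [deg_prod a, deg_prod (Fin.tail a)]
      exact Nat.lt_add_of_pos_right (Nat.add_pos_left (ha _) _)
    have tail_mem : embeddingSum u (Fin.tail a) ∈ B := by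
      have h := ih (Fin.tail a) (fun i => ha i.succ) fun x hx => hB x (hx.trans tail_lt)
      simpa only [sub_add_cancel] using
        add_mem h (B.zsmul_mem (hB _ tail_lt) ((-1) ^ k * k.factorial))
    have merge_mem (i₀ : Fin (k + 1)) :
        embeddingSum u (Function.update (Fin.tail a) i₀ (a 0 * a i₀.succ)) -
          ((-1) ^ k * k.factorial : ℤ) • ∑ j, u j (∏ i, a i) ∈ B := by
      rw [← Fin.prod_update_tail a i₀]
      refine ih _ (fun i => ?_) fun x hx => hB x (Fin.prod_update_tail a i₀ ▸ hx)
      rcases eq_or_ne i i₀ with rfl | hi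
      · simpa [deg_mul] using Or.inl (ha 0)
      · rw [Function.update_of_ne hi]
        exact ha i.succ
    have key : embeddingSum u a - ((-1) ^ (k + 1) * (k + 1).factorial : ℤ) • ∑ j, u j (∏ i, a i) =
        (∑ j, u j (a 0)) * embeddingSum u (Fin.tail a) -
          ∑ i₀, (embeddingSum u (Function.update (Fin.tail a) i₀ (a 0 * a i₀.succ)) -
            ((-1) ^ k * k.factorial : ℤ) • ∑ j, u j (∏ i, a i)) := by
      rw [embeddingSum_succ, Finset.sum_sub_distrib, Finset.sum_const, card_univ, Fintype.card_fin,
        ← natCast_zsmul, smul_smul, Nat.factorial_succ]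
      push_cast
      ring_nf
    rw [key]
    exact sub_mem (mul_mem (hB _ head_lt) tail_mem) (sum_mem fun i₀ _ => merge_mem i₀)

theorem sum_apply_prod_mem_of_card_le {K : Type*} [Field K] [CharZero K] [Algebra K A]
    {B : Subalgebra K A} (deg : M → ℕ) (deg_mul : ∀ x y, deg (x * y) = deg x + deg y) {k : ℕ}
    (hk : Fintype.card ι ≤ k) (a : Fin (k + 1) → M) (ha : ∀ i, 0 < deg (a i))
    (hB : ∀ x, deg x < deg (∏ i, a i) → ∑ j, u j x ∈ B) :
    ∑ j, u j (∏ i, a i) ∈ B := by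
  have h := embeddingSum_sub_mem u (B := B.toSubring) deg deg_mul a ha hB
  rw [embeddingSum_of_card_lt u (Nat.lt_succ_of_le hk), zero_sub, neg_mem_iff,
    ← Int.cast_smul_eq_zsmul K] at h
  refine (B.toSubmodule.smul_mem_iff ?_).1 h
  simp [Nat.factorial_ne_zero]

end EmbeddingSumRing

namespace PiTensorProduct

variable {K R : Type*} [CommSemiring K] [CommSemiring R] [Algebra K R]

theorem tprod_eq_prod_singleAlgHom {ι : Type*} [Fintype ι] [DecidableEq ι] {A : ι → Type*}
    [∀ i, CommSemiring (A i)] [∀ i, Algebra K (A i)] (x : ∀ i, A i) :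
    tprod K x = ∏ i, singleAlgHom i (x i) := by
  conv_lhs => rw [← Finset.univ_prod_mulSingle x]
  exact map_prod (tprodMonoidHom K) _ _

theorem reindex_mul {ι : Type*} (σ : Equiv.Perm ι) (x y : ⨂[K] (_ : ι), R) :
    reindex K (fun _ => R) σ (x * y) =
      reindex K (fun _ => R) σ x * reindex K (fun _ => R) σ y := by
  induction x using PiTensorProduct.induction_on with
  | smul_tprod c f =>
    induction y using PiTensorProduct.induction_on with
    | smul_tprod d g =>
      simp only [smul_mul_smul_comm, tprod_mul_tprod, map_smul, reindex_tprod]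
      rfl
    | add y₁ y₂ h₁ h₂ => simp only [mul_add, map_add, h₁, h₂]
  | add x₁ x₂ h₁ h₂ => simp only [add_mul, map_add, h₁, h₂]

noncomputable def reindexAlgEquiv {ι : Type*} (σ : Equiv.Perm ι) :
    (⨂[K] (_ : ι), R) ≃ₐ[K] ⨂[K] (_ : ι), R :=
  AlgEquiv.ofLinearEquiv (reindex K (fun _ => R) σ) (by rw [one_def, reindex_tprod]; rfl)
    (reindex_mul σ)

theorem reindex_singleAlgHom {ι : Type*} [DecidableEq ι] (σ : Equiv.Perm ι) (i : ι) (m : R) :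
    reindex K (fun _ => R) σ (singleAlgHom i m) = singleAlgHom (σ i) m := by
  rw [singleAlgHom_apply, reindex_tprod, singleAlgHom_apply]
  congr 1
  ext j
  simp [Pi.mulSingle_apply, Equiv.symm_apply_eq]

theorem sum_reindex_tprod_eq_embeddingSum {n : ℕ} (x : Fin n → R) :
    ∑ σ : Equiv.Perm (Fin n), reindex K (fun _ => R) σ (tprod K x) =
      embeddingSum (fun j => (singleAlgHom (R := K) (A := fun _ : Fin n => R) j : R →* _)) x := by
  rw [embeddingSum, ← (Equiv.embeddingEquivOfFinite (Fin n)).symm.sum_comp]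
  refine Fintype.sum_congr _ _ fun σ => ?_
  rw [tprod_eq_prod_singleAlgHom]
  exact (map_prod (reindexAlgEquiv σ) _ _).trans
    (Fintype.prod_congr _ _ fun i => reindex_singleAlgHom σ i (x i))

end PiTensorProduct

section PowerSum

variable {K R : Type*} [CommRing R]

theorem powerSum_eq_sum_singleAlgHom [CommRing K] [Algebra K R] {n : ℕ} (m : R) :
    powerSum K n m = ∑ j, singleAlgHom j m := by
  refine Fintype.sum_congr _ _ fun j => ?_
  rw [singleAlgHom_apply]
  congr 1
  ext k
  simp [Pi.mulSingle_apply]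

theorem reindex_powerSum [CommRing K] [Algebra K R] {n : ℕ} (σ : Equiv.Perm (Fin n)) (m : R) :
    reindex K (fun _ => R) σ (powerSum K n m) = powerSum K n m := by
  simp only [powerSum_eq_sum_singleAlgHom, map_sum, reindex_singleAlgHom]
  exact Equiv.sum_comp σ fun j => singleAlgHom j m

theorem mem_of_forall_reindex_eq_self [Field K] [CharZero K] [Algebra K R] {n : ℕ}
    {B : Subalgebra K (⨂[K] (_ : Fin n), R)} (hB : ∀ m, powerSum K n m ∈ B)
    {z : ⨂[K] (_ : Fin n), R} (hz : ∀ σ, reindex K (fun _ => R) σ z = z) : z ∈ B := by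
  have symmetrize_mem (w : ⨂[K] (_ : Fin n), R) :
      ∑ σ : Equiv.Perm (Fin n), reindex K (fun _ => R) σ w ∈ B := by
    induction w using PiTensorProduct.induction_on with
    | smul_tprod c x =>
      simp only [map_smul, ← Finset.smul_sum, sum_reindex_tprod_eq_embeddingSum]
      refine B.smul_mem (embeddingSum_mem _ (B := B.toSubring) (fun m => ?_) x) c
      simpa [powerSum_eq_sum_singleAlgHom] using hB m
    | add x y hx hy => simpa only [map_add, Finset.sum_add_distrib] using add_mem hx hy
  have average :
      ∑ σ : Equiv.Perm (Fin n), reindex K (fun _ => R) σ z = (n.factorial : K) • z := by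
    simp [hz, Fintype.card_perm, Nat.cast_smul_eq_nsmul]
  exact (B.toSubmodule.smul_mem_iff (Nat.cast_ne_zero.2 n.factorial_ne_zero)).1
    (average ▸ symmetrize_mem z)

end PowerSum

theorem Finsupp.exists_sum_eq_of_lt_degree {σ : Type*} (k : ℕ) (d : σ →₀ ℕ)
    (hd : k < d.degree) : ∃ e : Fin (k + 1) → σ →₀ ℕ, (∀ i, 0 < (e i).degree) ∧ ∑ i, e i = d := by
  induction k generalizing d with
  | zero => exact ⟨fun _ => d, fun _ => hd, Fin.sum_univ_one _⟩
  | succ k ih =>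
    obtain ⟨x, hx⟩ : ∃ x, d x ≠ 0 := by
      by_contra! h
      have : d = 0 := Finsupp.ext h
      simp [this] at hd
    have split : Finsupp.single x 1 + (d - Finsupp.single x 1) = d :=
      add_tsub_cancel_of_le (Finsupp.single_le_iff.2 (Nat.one_le_iff_ne_zero.2 hx))
    have hdeg := congrArg Finsupp.degree split
    rw [map_add, Finsupp.degree_single] at hdeg
    obtain ⟨e, he, hsum⟩ := ih (d - Finsupp.single x 1) (by omega)
    refine ⟨Fin.cons (Finsupp.single x 1) e, Fin.cases (by simp) he, ?_⟩
    rw [Fin.sum_univ_succ]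
    simpa [hsum] using split

def smallPowerSums (K : Type*) [CommRing K] (r n : ℕ) :
    Set (⨂[K] (_ : Fin n), MvPolynomial (Fin r) K) :=
  {t | ∃ d : Fin r →₀ ℕ, (d.sum fun _ e => e) ≤ n ∧ t = powerSum K n (MvPolynomial.monomial d 1)}

section SmallPowerSums

variable (K : Type*) [Field K] [CharZero K] {r n : ℕ}

theorem powerSum_monomial_mem_adjoin (d : Fin r →₀ ℕ) :
    powerSum K n (MvPolynomial.monomial d 1) ∈ Algebra.adjoin K (smallPowerSums K r n) := by
  induction hs : d.degree using Nat.strong_induction_on generalizing d with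
  | _ s ih =>
    by_cases hle : d.degree ≤ n
    · exact Algebra.subset_adjoin ⟨d, hle, rfl⟩
    obtain ⟨e, he, rfl⟩ := d.exists_sum_eq_of_lt_degree n (not_le.1 hle)
    -- factor `monomial (∑ i, e i) 1` in the monoid `Multiplicative (Fin r →₀ ℕ)`, graded by degree
    have := sum_apply_prod_mem_of_card_le (B := Algebra.adjoin K (smallPowerSums K r n))
      (fun j => (singleAlgHom (R := K) (A := fun _ : Fin n => MvPolynomial (Fin r) K) j
        ).toMonoidHom.comp (MvPolynomial.monomialOneHom K (Fin r)))
      (fun x => (Multiplicative.toAdd x).degree) (fun x y => map_add _ _ _) (k := n) (by simp)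
      (fun i => Multiplicative.ofAdd (e i)) he (fun x hx => ?_)
    · rw [← ofAdd_sum] at this
      rw [powerSum_eq_sum_singleAlgHom]
      exact this
    · rw [← ofAdd_sum, toAdd_ofAdd, hs] at hx
      have := ih _ hx (Multiplicative.toAdd x) rfl
      rw [powerSum_eq_sum_singleAlgHom] at this
      exact this

theorem powerSum_mem_adjoin (m : MvPolynomial (Fin r) K) :
    powerSum K n m ∈ Algebra.adjoin K (smallPowerSums K r n) := by
  induction m using MvPolynomial.induction_on' with
  | monomial d c =>
    have : powerSum K n (MvPolynomial.monomial d c) =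
        c • powerSum K n (MvPolynomial.monomial d 1) := by
      simp only [powerSum_eq_sum_singleAlgHom, Finset.smul_sum, ← map_smul, smul_eq_mul, mul_one]
    rw [this]
    exact Subalgebra.smul_mem _ (powerSum_monomial_mem_adjoin K d) c
  | add p q hp hq =>
    rw [powerSum_eq_sum_singleAlgHom] at hp hq ⊢
    simpa only [map_add, Finset.sum_add_distrib] using add_mem hp hq

end SmallPowerSums

theorem gamma_n_generated_by_small_power_sums_general (K : Type*) [Field K] [CharZero K]
    (r : ℕ) {n : ℕ} (z : ⨂[K] (_ : Fin n), MvPolynomial (Fin r) K) :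
    z ∈ Algebra.adjoin K
        {t | ∃ d : Fin r →₀ ℕ, (d.sum fun _ e => e) ≤ n ∧
          t = powerSum K n (MvPolynomial.monomial d 1)} ↔
      ∀ σ : Equiv.Perm (Fin n),
        PiTensorProduct.reindex K (fun _ : Fin n => MvPolynomial (Fin r) K) σ z = z := by
  refine ⟨fun hz σ => ?_, mem_of_forall_reindex_eq_self (powerSum_mem_adjoin K)⟩
  refine AlgHom.adjoin_le_equalizer (reindexAlgEquiv σ).toAlgHom (AlgHom.id K _) ?_ hz
  rintro _ ⟨d, -, rfl⟩
  exact reindex_powerSum σ _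

/-- **Lemma 3.7.**  Let `K` be a field of characteristic zero and `F = K[T₁,…,T_r]`.  For
`n > 0`, the `K`-algebra `Γⁿ_K(F)`—identified via `αₙ` with the algebra `TSⁿ_K(F)` of
symmetric tensors, i.e. the tensors fixed by every permutation of the factors—is
generated by the elements `γ¹(m) * γ^{n-1}(1) = P(m)`, for monomials `m` of total degree
at most `n`.  Formulated elementwise: a tensor is symmetric if and only if it lies in the
`K`-subalgebra generated by these power sums. -/
theorem gamma_n_generated_by_small_power_sums (K : Type*) [Field K] [CharZero K]
    (r : ℕ) {n : ℕ} (hn : 0 < n) (z : ⨂[K] (_ : Fin n), MvPolynomial (Fin r) K) :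
    z ∈ Algebra.adjoin K
        {t | ∃ d : Fin r →₀ ℕ, (d.sum fun _ e => e) ≤ n ∧
          t = powerSum K n (MvPolynomial.monomial d 1)} ↔
      ∀ σ : Equiv.Perm (Fin n),
        PiTensorProduct.reindex K (fun _ : Fin n => MvPolynomial (Fin r) K) σ z = z :=
  gamma_n_generated_by_small_power_sums_general K r z
end
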